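/- (Rank-4 Poisson representation of the Chaplygin sleigh.) For the Chaplygin sleigh on a horizontal plane (U = 0), with defining vector field v on ℝ⁵, scaling field u = v₁ ∂/∂v₁ + ω ∂/∂ω, translation fields u_x = ∂/∂x and u_y = ∂/∂y, and energy E = ½(m v₁² + (I+ma²) ω²), define the matrix field J⁽⁴⁾ = v∧u + u_x∧u_y. Then for every point p ∈ ℝ⁵, J⁽⁴⁾(p)·∇E(p) = 2E(p)·v(p); in particular on the set {E ≠ 0} the system is conformally Hamiltonian: v = (2E)⁻¹ J⁽⁴⁾ ∇E. -/

import Mathlib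

/-- The Chaplygin sleigh on a horizontal plane (`U = 0`): the system on ℝ⁵, coordinates
`p = (v₁, ω, x, y, φ)`, parameters `m, I, a > 0`:
`m v̇₁ = m a ω²`, `(I+ma²) ω̇ = −m a ω v₁`, `ẋ = v₁ cos φ`, `ẏ = v₁ sin φ`, `φ̇ = ω`. -/
noncomputable def sleigh (m I a : ℝ) (p : Fin 5 → ℝ) : Fin 5 → ℝ :=
  ![a * (p 1) ^ 2,
    -(m * a * (p 1) * (p 0)) / (I + m * a ^ 2),
    (p 0) * Real.cos (p 4),
    (p 0) * Real.sin (p 4),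
    p 1]

/-- The energy of the Chaplygin sleigh on a horizontal plane:
`E = ½(m v₁² + (I+ma²) ω²)`. -/
noncomputable def sleighE (m I a : ℝ) (p : Fin 5 → ℝ) : ℝ :=
  (1 / 2) * (m * (p 0) ^ 2 + (I + m * a ^ 2) * (p 1) ^ 2)

/-- The wedge of two vector fields: `(v ∧ u)_ij = v_i u_j − v_j u_i`. -/
noncomputable def wedge {n : ℕ} (v u : (Fin n → ℝ) → (Fin n → ℝ)) (x : Fin n → ℝ) :
    Matrix (Fin n) (Fin n) ℝ :=
  Matrix.of fun i j => v x i * u x j - v x j * u x i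

/-- The gradient of a scalar function on ℝⁿ, as the vector of partial derivatives. -/
noncomputable def grad {n : ℕ} (F : (Fin n → ℝ) → ℝ) (x : Fin n → ℝ) : Fin n → ℝ :=
  fun j => fderiv ℝ F x (Pi.single j 1)

/-!
Since `(v ∧ u) g = (u ⬝ g) v - (v ⬝ g) u`, the identity reduces to three facts about `∇E`:
it is orthogonal to the sleigh field (conservation of energy), its pairing with the scaling
field is `2E` (Euler's relation for the quadratic form `E`), and it is orthogonal to `∂/∂x`
and `∂/∂y` (`E` does not depend on the position).
-/

theorem wedge_mulVec {n : ℕ} (v u : (Fin n → ℝ) → (Fin n → ℝ)) (x g : Fin n → ℝ) :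
    (wedge v u x).mulVec g = (u x ⬝ᵥ g) • v x - (v x ⬝ᵥ g) • u x := by
  ext i
  simp only [wedge, Matrix.mulVec, dotProduct, Matrix.of_apply, sub_mul, Finset.sum_sub_distrib,
    Pi.sub_apply, Pi.smul_apply, smul_eq_mul, Finset.sum_mul]
  congr 1 <;> exact Finset.sum_congr rfl fun j _ => by ring

theorem grad_sleighE (m I a : ℝ) (p : Fin 5 → ℝ) :
    grad (sleighE m I a) p = ![m * p 0, (I + m * a ^ 2) * p 1, 0, 0, 0] := by
  have h0 := (hasFDerivAt_apply (𝕜 := ℝ) (0 : Fin 5) p).pow 2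
  have h1 := (hasFDerivAt_apply (𝕜 := ℝ) (1 : Fin 5) p).pow 2
  have hE : HasFDerivAt (sleighE m I a) _ p :=
    ((h0.const_mul m).add (h1.const_mul (I + m * a ^ 2))).const_mul (1 / 2)
  ext j
  fin_cases j <;> simp [grad, hE.fderiv] <;> ring

theorem sleigh_dotProduct_grad_sleighE {m I a : ℝ} (hD : I + m * a ^ 2 ≠ 0) (p : Fin 5 → ℝ) :
    sleigh m I a p ⬝ᵥ grad (sleighE m I a) p = 0 := by
  simp only [dotProduct, sleigh, grad_sleighE, Fin.sum_univ_five, Matrix.cons_val_zero,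
    Matrix.cons_val_one, Matrix.cons_val, mul_zero, add_zero]
  rw [div_mul_eq_mul_div, mul_div_assoc, mul_div_cancel_left₀ _ hD]
  ring

theorem scaling_dotProduct_grad_sleighE (m I a : ℝ) (p : Fin 5 → ℝ) :
    ![p 0, p 1, 0, 0, 0] ⬝ᵥ grad (sleighE m I a) p = 2 * sleighE m I a p := by
  simp only [dotProduct, sleighE, grad_sleighE, Fin.sum_univ_five, Matrix.cons_val_zero,
    Matrix.cons_val_one, Matrix.cons_val, mul_zero, add_zero]
  ring

theorem sleigh_rank_four_poisson_general
    (m I a : ℝ) (hm : 0 < m) (hI : 0 < I) :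
    ∀ p : Fin 5 → ℝ,
      ((wedge (sleigh m I a) (fun q => ![q 0, q 1, 0, 0, 0]) p
          + wedge (fun _ => ![0, 0, 1, 0, 0]) (fun _ => ![0, 0, 0, 1, 0]) p)).mulVec
          (grad (sleighE m I a) p)
        = (2 * sleighE m I a p) • sleigh m I a p := by
  intro p
  have hD : I + m * a ^ 2 ≠ 0 := by positivity
  have translations : ![(0 : ℝ), 0, 1, 0, 0] ⬝ᵥ grad (sleighE m I a) p = 0
      ∧ ![(0 : ℝ), 0, 0, 1, 0] ⬝ᵥ grad (sleighE m I a) p = 0 := by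
    simp [grad_sleighE, dotProduct, Fin.sum_univ_five]
  rw [Matrix.add_mulVec, wedge_mulVec, wedge_mulVec, scaling_dotProduct_grad_sleighE,
    sleigh_dotProduct_grad_sleighE hD, translations.1, translations.2]
  simp

/-- **rank-4 Poisson representation of the Chaplygin sleigh.** With the scaling
field `u = v₁∂/∂v₁ + ω∂/∂ω`, the translation fields `u_x = ∂/∂x`, `u_y = ∂/∂y`, and
`J⁽⁴⁾ = v∧u + u_x∧u_y`, one has `J⁽⁴⁾(p)·∇E(p) = 2E(p)·v(p)` for every `p ∈ ℝ⁵`; in particular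
on `{E ≠ 0}` the sleigh is conformally Hamiltonian: `v = (2E)⁻¹ J⁽⁴⁾ ∇E`. -/
theorem sleigh_rank_four_poisson
    (m I a : ℝ) (hm : 0 < m) (hI : 0 < I) (ha : 0 < a) :
    ∀ p : Fin 5 → ℝ,
      ((wedge (sleigh m I a) (fun q => ![q 0, q 1, 0, 0, 0]) p
          + wedge (fun _ => ![0, 0, 1, 0, 0]) (fun _ => ![0, 0, 0, 1, 0]) p)).mulVec
          (grad (sleighE m I a) p)
        = (2 * sleighE m I a p) • sleigh m I a p :=
  sleigh_rank_four_poisson_general m I a hm hI
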